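/- arXiv:2107.07861 — 4 statements merged into one kernel-verified Lean document; each statement's English description precedes it below -/
import Mathlib

section
/- Let α be irrational and let (x_n) be the sequence α, 2α, 2α, 3α, 3α, 3α, …, i.e., x_n = mα (mod 1) whenever C(m,2) < n ≤ C(m+1,2). Then for every nonzero integer k and every β ∈ (0,1), the Cesàro averages (1/N)∑_{n=1}^N e^{2πik x_n} e^{-2πinβ} tend to 0 as N → ∞. -/
/-!
On the block `C(m,2) < n ≤ C(m+1,2)` the phase `e^{2πik x_n}` is the constant `e^{2πik·{mα}}`,
so any run of consecutive terms inside one block is a unimodular constant times a partial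
geometric sum of `z = e^{-2πiβ} ≠ 1`, hence bounded by `2 / |1 - z|`. The first `N` terms are
covered by `O(√N)` blocks, so the partial sums are `O(√N)` and the averages are `O(1/√N)`.
-/

open Filter Finset Topology
open Real Complex

theorem norm_sum_Ioc_pow_le {𝕜 : Type*} [NormedDivisionRing 𝕜] {z : 𝕜} (hz : z ≠ 1)
    (hz1 : ‖z‖ ≤ 1) (a b : ℕ) : ‖∑ n ∈ Ioc a b, z ^ n‖ ≤ 2 / ‖1 - z‖ := by
  rcases le_or_gt b a with hba | hab
  · rw [Ioc_eq_empty_of_le hba, sum_empty, norm_zero]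
    positivity
  rw [← Ico_add_one_add_one_eq_Ioc, geom_sum_Ico hz (by omega), norm_div, norm_sub_rev z]
  gcongr
  calc ‖z ^ (b + 1) - z ^ (a + 1)‖ ≤ ‖z‖ ^ (b + 1) + ‖z‖ ^ (a + 1) := by
        simpa only [norm_pow] using norm_sub_le (z ^ (b + 1)) (z ^ (a + 1))
    _ ≤ 1 + 1 := by gcongr <;> exact pow_le_one₀ (norm_nonneg z) hz1
    _ = 2 := one_add_one_eq_two

theorem norm_sum_Ioc_le_of_blocks {E : Type*} [SeminormedAddCommGroup E] {t : ℕ → ℕ}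
    (ht : Monotone t) (ht0 : t 0 = 0) {f : ℕ → E} {B : ℝ}
    (hB : ∀ m a b, t m ≤ a → b ≤ t (m + 1) → ‖∑ n ∈ Ioc a b, f n‖ ≤ B) (M : ℕ) {N : ℕ}
    (hN : N ≤ t M) : ‖∑ n ∈ Ioc 0 N, f n‖ ≤ M * B := by
  induction M generalizing N with
  | zero => simp [Nat.le_zero.mp (ht0 ▸ hN)]
  | succ M ih =>
    have hB0 : 0 ≤ B := by
      simpa using hB 0 (t 0) (t 0) le_rfl (ht (Nat.zero_le 1))
    push_cast
    rcases le_or_gt N (t M) with hNM | hMN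
    · linarith [ih hNM]
    rw [← sum_Ioc_consecutive _ (Nat.zero_le (t M)) hMN.le]
    calc ‖∑ n ∈ Ioc 0 (t M), f n + ∑ n ∈ Ioc (t M) N, f n‖
        ≤ ‖∑ n ∈ Ioc 0 (t M), f n‖ + ‖∑ n ∈ Ioc (t M) N, f n‖ := norm_add_le _ _
      _ ≤ M * B + B := add_le_add (ih le_rfl) (hB M _ _ le_rfl hN)
      _ = (M + 1) * B := by ring

theorem le_choose_two_two_mul_sqrt_add_two (N : ℕ) : N ≤ (2 * N.sqrt + 2).choose 2 := by
  have hsq : N < (N.sqrt + 1) * (N.sqrt + 1) := Nat.lt_succ_sqrt N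
  have hchoose : (2 * N.sqrt + 2).choose 2 = (N.sqrt + 1) * (2 * N.sqrt + 1) := by
    rw [Nat.choose_two_right, show 2 * N.sqrt + 2 - 1 = 2 * N.sqrt + 1 by omega,
      show (2 * N.sqrt + 2) * (2 * N.sqrt + 1) = (N.sqrt + 1) * (2 * N.sqrt + 1) * 2 by ring,
      Nat.mul_div_cancel _ two_pos]
  rw [hchoose]
  nlinarith

theorem exp_neg_two_pi_I_mul_ne_one {β : ℝ} (hβ : ∀ n : ℤ, (n : ℝ) ≠ β) :
    exp (-(2 * π * I * β)) ≠ 1 := by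
  rw [Ne, Complex.exp_eq_one_iff]
  rintro ⟨n, hn⟩
  have him := congrArg Complex.im hn
  simp only [neg_im, mul_im, mul_re, ofReal_re, ofReal_im, I_re, I_im, re_ofNat, im_ofNat,
    intCast_re, intCast_im] at him
  exact hβ (-n) (by push_cast; nlinarith [pi_pos])

theorem norm_sum_Ioc_exp_of_eq_const {β : ℝ} (hβ : exp (-(2 * π * I * β)) ≠ 1) (k : ℤ)
    {x : ℕ → ℝ} {y : ℝ} {a b : ℕ} (hx : ∀ n ∈ Ioc a b, x n = y) :
    ‖∑ n ∈ Ioc a b, exp (2 * π * I * k * x n) * exp (-(2 * π * I * n * β))‖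
      ≤ 2 / ‖1 - exp (-(2 * π * I * β))‖ := by
  set z := exp (-(2 * π * I * β))
  set c := exp (2 * π * I * k * y)
  have hterm : ∀ n ∈ Ioc a b,
      exp (2 * π * I * k * x n) * exp (-(2 * π * I * n * β)) = c * z ^ n := by
    intro n hn
    rw [hx n hn, ← Complex.exp_nat_mul]
    congr 2
    ring
  have hc : ‖c‖ = 1 := by simp [c, Complex.norm_exp]
  have hz : ‖z‖ ≤ 1 := by simp [z, Complex.norm_exp]
  rw [sum_congr rfl hterm, ← mul_sum, norm_mul, hc, one_mul]
  exact norm_sum_Ioc_pow_le hβ hz a b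

theorem stmt0_general (α : ℝ) (x : ℕ → ℝ)
    (hx : ∀ m n : ℕ, Nat.choose m 2 < n → n ≤ Nat.choose (m + 1) 2 →
      x n = Int.fract ((m : ℝ) * α))
    (k : ℤ) (β : ℝ) (hβ : β ∈ Set.Ioo (0 : ℝ) 1) :
    Tendsto (fun N : ℕ => (1 / (N : ℂ)) * ∑ n ∈ Finset.Icc 1 N,
      Complex.exp (2 * Real.pi * Complex.I * (k : ℂ) * (x n : ℂ)) *
        Complex.exp (-(2 * Real.pi * Complex.I * (n : ℂ) * (β : ℂ))))
      atTop (nhds 0) := by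
  have hz : exp (-(2 * π * I * β)) ≠ 1 := exp_neg_two_pi_I_mul_ne_one fun n hn => by
    have h0 : (0 : ℝ) < n := hn ▸ hβ.1
    have h1 : (n : ℝ) < 1 := hn ▸ hβ.2
    norm_cast at h0 h1
    omega
  set C := 2 / ‖1 - exp (-(2 * π * I * β))‖
  have hsum (N : ℕ) : ‖∑ n ∈ Icc 1 N, exp (2 * π * I * k * x n) * exp (-(2 * π * I * n * β))‖
      ≤ (2 * N.sqrt + 2 : ℕ) * C := by
    rw [show Icc 1 N = Ioc 0 N from Icc_add_one_left_eq_Ioc 0 N]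
    exact norm_sum_Ioc_le_of_blocks (Nat.choose_mono 2) rfl
      (fun m a b ha hb => norm_sum_Ioc_exp_of_eq_const hz k fun n hn =>
        hx m n (ha.trans_lt (mem_Ioc.1 hn).1) ((mem_Ioc.1 hn).2.trans hb)) _
      (le_choose_two_two_mul_sqrt_add_two N)
  rw [tendsto_zero_iff_norm_tendsto_zero]
  refine squeeze_zero' (Eventually.of_forall fun N => norm_nonneg _) ?_
    ((tendsto_const_nhds (x := 4 * C)).div_atTop
      (tendsto_sqrt_atTop.comp tendsto_natCast_atTop_atTop))
  filter_upwards [eventually_ge_atTop 1] with N hN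
  have hs : (1 : ℝ) ≤ N.sqrt := by exact_mod_cast Nat.sqrt_pos.mpr hN
  calc _ = ‖∑ n ∈ Icc 1 N, exp (2 * π * I * k * x n) * exp (-(2 * π * I * n * β))‖ / N := by
        rw [norm_mul, norm_div, norm_one, Complex.norm_natCast, one_div, inv_mul_eq_div]
    _ ≤ (2 * N.sqrt + 2 : ℕ) * C / N := by gcongr; exact hsum N
    _ ≤ 4 * √N * C / N := by
        gcongr
        push_cast
        linarith [Real.nat_sqrt_le_real_sqrt (a := N)]
    _ = 4 * C / √N := by
        rw [mul_right_comm, mul_div_assoc, sqrt_div_self', mul_one_div]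

theorem stmt0 (α : ℝ) (hα : Irrational α) (x : ℕ → ℝ)
    (hx : ∀ m n : ℕ, Nat.choose m 2 < n → n ≤ Nat.choose (m + 1) 2 →
      x n = Int.fract ((m : ℝ) * α))
    (k : ℤ) (hk : k ≠ 0) (β : ℝ) (hβ : β ∈ Set.Ioo (0 : ℝ) 1) :
    Tendsto (fun N : ℕ => (1 / (N : ℂ)) * ∑ n ∈ Finset.Icc 1 N,
      Complex.exp (2 * Real.pi * Complex.I * (k : ℂ) * (x n : ℂ)) *
        Complex.exp (-(2 * Real.pi * Complex.I * (n : ℂ) * (β : ℂ))))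
      atTop (nhds 0) :=
  stmt0_general α x hx k β hβ
end

section
/- Let (x_n) be the sequence x_n = mα (mod 1) for C(m,2) < n ≤ C(m+1,2), with α irrational. Then (x_n) is a compact sequence: for every ε > 0 there exists K ∈ ℕ such that sup_{m ∈ ℕ} min_{1 ≤ k ≤ K} limsup_{N→∞} (1/N)∑_{n=1}^N |x_{n+m} − x_{n+k}|² < ε. -/
open Filter Finset Topology

lemma aux_dist_le_one (a c : AddCircle (1:ℝ)) : dist a c ≤ 1 := by
  rw [dist_eq_norm]
  have := AddCircle.norm_le_half_period (1:ℝ) one_ne_zero (x := a - c)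
  norm_num at this
  linarith

lemma aux_sqrt_atTop : Tendsto Real.sqrt atTop atTop := by
  apply tendsto_atTop_atTop.2
  intro b
  refine ⟨b^2, fun a ha => ?_⟩
  calc b ≤ |b| := le_abs_self b
    _ = Real.sqrt (b^2) := (Real.sqrt_sq_eq_abs b).symm
    _ ≤ Real.sqrt a := Real.sqrt_le_sqrt ha

lemma aux_inv_sqrt : Tendsto (fun N : ℕ => (Real.sqrt N)⁻¹) atTop (𝓝 0) := by
  apply Tendsto.inv_tendsto_atTop
  exact aux_sqrt_atTop.comp tendsto_natCast_atTop_atTop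

theorem stmt2 (α : ℝ) (hα : Irrational α) (x : ℕ → AddCircle (1 : ℝ))
    (hx : ∀ m n : ℕ, Nat.choose m 2 < n → n ≤ Nat.choose (m + 1) 2 →
      x n = (((m : ℝ) * α : ℝ) : AddCircle (1 : ℝ))) :
    ∀ ε : ℝ, 0 < ε → ∃ K : ℕ, 1 ≤ K ∧ ∀ m : ℕ, 1 ≤ m →
      ∃ k : ℕ, 1 ≤ k ∧ k ≤ K ∧
        Filter.limsup (fun N : ℕ => (1 / (N : ℝ)) *
          ∑ n ∈ Finset.Icc 1 N, dist (x (n + m)) (x (n + k)) ^ 2) atTop < ε := by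
  have hch : ∀ j : ℕ, Nat.choose (j+1) 2 = (j+1)*j/2 := by
    intro j
    rw [Nat.choose_two_right]
    simp
  have hex : ∀ n : ℕ, ∃ j, n ≤ Nat.choose (j + 1) 2 := by
    intro n
    refine ⟨n, ?_⟩
    rw [hch]
    rw [Nat.le_div_iff_mul_le two_pos]
    rcases Nat.eq_zero_or_pos n with h | h
    · simp [h]
    · calc n * 2 ≤ n * (n+1) := Nat.mul_le_mul_left _ (by omega)
        _ = (n+1) * n := Nat.mul_comm _ _
  set b : ℕ → ℕ := fun n => Nat.find (hex n) with hb_def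
  have hb_le : ∀ n, n ≤ Nat.choose (b n + 1) 2 := fun n => Nat.find_spec (hex n)
  have hb_min : ∀ n j, n ≤ Nat.choose (j+1) 2 → b n ≤ j := fun n j h => Nat.find_min' (hex n) h
  have hb_pos : ∀ n, 1 ≤ n → 1 ≤ b n := by
    intro n hn
    by_contra h
    have hb0 : b n = 0 := by omega
    have := hb_le n
    rw [hb0] at this
    simp [Nat.choose] at this
    omega
  have hb_lt : ∀ n, 1 ≤ n → Nat.choose (b n) 2 < n := by
    intro n hn
    have h1 := hb_pos n hn
    have := Nat.find_min (hex n) (show b n - 1 < b n by omega)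
    rw [show b n - 1 + 1 = b n by omega] at this
    omega
  have hxb : ∀ n, 1 ≤ n → x n = (((b n : ℝ) * α : ℝ) : AddCircle (1:ℝ)) :=
    fun n hn => hx (b n) n (hb_lt n hn) (hb_le n)
  have hb_mono : ∀ n n', n ≤ n' → b n ≤ b n' :=
    fun n n' h => hb_min n (b n') (le_trans h (hb_le n'))
  intro ε hε
  refine ⟨1, le_refl 1, fun m hm => ⟨1, le_refl 1, le_refl 1, ?_⟩⟩
  -- when no block boundary in between, distances vanish
  have hzero : ∀ n : ℕ, n + m ≤ Nat.choose (b (n+1) + 1) 2 → x (n+m) = x (n+1) := by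
    intro n h
    have h1 : b (n+m) ≤ b (n+1) := hb_min (n+m) (b (n+1)) h
    have h2 : b (n+1) ≤ b (n+m) := hb_mono _ _ (by omega)
    rw [hxb (n+m) (by omega), hxb (n+1) (by omega), le_antisymm h1 h2]
  -- sum bound
  have hsum : ∀ N : ℕ, ∑ n ∈ Finset.Icc 1 N, dist (x (n + m)) (x (n + 1)) ^ 2
      ≤ ((m * b (N+1) : ℕ) : ℝ) := by
    intro N
    set S : Finset ℕ := (Finset.Icc 1 N).filter
      (fun n => Nat.choose (b (n+1) + 1) 2 < n + m) with hS
    have hstep1 : ∑ n ∈ Finset.Icc 1 N, dist (x (n + m)) (x (n + 1)) ^ 2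
        = ∑ n ∈ S, dist (x (n + m)) (x (n + 1)) ^ 2 := by
      rw [hS]
      refine (Finset.sum_filter_of_ne ?_).symm
      intro n _ hne
      by_contra h
      push_neg at h
      exact hne (by rw [hzero n h]; simp)
    have hstep2 : ∑ n ∈ S, dist (x (n + m)) (x (n + 1)) ^ 2 ≤ ∑ _n ∈ S, (1:ℝ) := by
      refine Finset.sum_le_sum fun n _ => ?_
      have h1 := aux_dist_le_one (x (n+m)) (x (n+1))
      have h2 : (0:ℝ) ≤ dist (x (n+m)) (x (n+1)) := dist_nonneg
      nlinarith
    have hcard : S.card ≤ m * b (N+1) := by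
      have hsub : S ⊆ (Finset.Icc 1 (b (N+1))).biUnion
          (fun j => Finset.Ico (Nat.choose (j+1) 2 + 1 - m) (Nat.choose (j+1) 2)) := by
        intro n hn
        rw [hS, Finset.mem_filter, Finset.mem_Icc] at hn
        obtain ⟨⟨hn1, hnN⟩, hfj⟩ := hn
        refine Finset.mem_biUnion.2 ⟨b (n+1), ?_, ?_⟩
        · rw [Finset.mem_Icc]
          exact ⟨hb_pos (n+1) (by omega), hb_mono _ _ (by omega)⟩
        · rw [Finset.mem_Ico]
          have := hb_le (n+1)
          omega
      calc S.card ≤ _ := Finset.card_le_card hsub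
        _ ≤ ∑ j ∈ Finset.Icc 1 (b (N+1)),
            (Finset.Ico (Nat.choose (j+1) 2 + 1 - m) (Nat.choose (j+1) 2)).card :=
            Finset.card_biUnion_le
        _ ≤ ∑ _j ∈ Finset.Icc 1 (b (N+1)), m := by
            refine Finset.sum_le_sum fun j _ => ?_
            rw [Nat.card_Ico]
            omega
        _ = b (N+1) * m := by simp [Nat.card_Icc]
        _ = m * b (N+1) := Nat.mul_comm _ _
    calc ∑ n ∈ Finset.Icc 1 N, dist (x (n + m)) (x (n + 1)) ^ 2
        = ∑ n ∈ S, dist (x (n + m)) (x (n + 1)) ^ 2 := hstep1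
      _ ≤ ∑ _n ∈ S, (1:ℝ) := hstep2
      _ = (S.card : ℝ) := by simp
      _ ≤ ((m * b (N+1) : ℕ) : ℝ) := by exact_mod_cast hcard
  -- bound on b
  have hbb : ∀ N : ℕ, 1 ≤ N → (b N : ℝ) ≤ Real.sqrt (2*N) + 1 := by
    intro N hN
    have h1 := hb_lt N hN
    have hp := hb_pos N hN
    rw [Nat.choose_two_right] at h1
    have h2 : b N * (b N - 1) < N * 2 := (Nat.div_lt_iff_lt_mul two_pos).1 h1
    have h3 : ((b N : ℝ) - 1)^2 ≤ 2 * N := by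
      have : ((b N : ℝ)) * ((b N : ℝ) - 1) < N * 2 := by
        have := h2
        have hc : ((b N * (b N - 1) : ℕ) : ℝ) < ((N * 2 : ℕ) : ℝ) := by exact_mod_cast h2
        push_cast [Nat.cast_sub hp] at hc
        push_cast
        linarith
      nlinarith [(show (1:ℝ) ≤ (b N : ℝ) by exact_mod_cast hp)]
    have h4 : (b N : ℝ) - 1 ≤ Real.sqrt (2*N) := by
      rw [show (2*(N:ℝ)) = Real.sqrt (2*N) ^ 2 from (Real.sq_sqrt (by positivity)).symm] at h3
      nlinarith [Real.sqrt_nonneg (2*(N:ℝ)), (show (1:ℝ) ≤ (b N : ℝ) by exact_mod_cast hp),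
        sq_nonneg ((b N : ℝ) - 1 - Real.sqrt (2*(N:ℝ)))]
    linarith
  -- the sequence tends to 0
  have hten : Tendsto (fun N : ℕ => (1 / (N : ℝ)) *
      ∑ n ∈ Finset.Icc 1 N, dist (x (n + m)) (x (n + 1)) ^ 2) atTop (𝓝 0) := by
    have hg : Tendsto (fun N : ℕ =>
        (m : ℝ) * ((Real.sqrt (2*(N+1)) + 1) / N)) atTop (𝓝 0) := by
      have h1 : Tendsto (fun N : ℕ => Real.sqrt (2*(N+1)) / N) atTop (𝓝 0) := by
        apply squeeze_zero' (g := fun N : ℕ => 2 * (Real.sqrt N)⁻¹)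
        · filter_upwards [eventually_ge_atTop 1] with N hN
          positivity
        · filter_upwards [eventually_ge_atTop 2] with N hN
          have hN1 : (1:ℝ) ≤ N := by exact_mod_cast Nat.one_le_of_lt hN
          have hNpos : (0:ℝ) < N := by linarith
          have hs : Real.sqrt (2*((N:ℝ)+1)) ≤ 2 * Real.sqrt N := by
            rw [show (2:ℝ) * Real.sqrt N = Real.sqrt (4*N) by
              rw [show (4:ℝ)*N = 2^2 * N by ring, Real.sqrt_mul (by positivity),
                Real.sqrt_sq (by norm_num)]]
            apply Real.sqrt_le_sqrt
            linarith
          have hsN : Real.sqrt N * Real.sqrt N = N := Real.mul_self_sqrt hNpos.le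
          have hsNpos : (0:ℝ) < Real.sqrt N := Real.sqrt_pos.2 hNpos
          rw [div_le_iff₀ hNpos]
          nlinarith [hs, hsN, inv_mul_cancel₀ hsNpos.ne', Real.sqrt_nonneg (N:ℝ),
            inv_nonneg.2 hsNpos.le]
        · simpa using aux_inv_sqrt.const_mul (2:ℝ)
      have h2 : Tendsto (fun N : ℕ => (1:ℝ) / N) atTop (𝓝 0) :=
        tendsto_one_div_atTop_nhds_zero_nat
      have h3 := (h1.add h2).const_mul (m : ℝ)
      rw [(by ring : (m:ℝ) * (0 + 0) = 0)] at h3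
      refine h3.congr fun N => ?_
      ring
    apply squeeze_zero' (g := fun N : ℕ => (m : ℝ) * ((Real.sqrt (2*(N+1)) + 1) / N))
    · filter_upwards [eventually_ge_atTop 1] with N hN
      have : (0:ℝ) ≤ ∑ n ∈ Finset.Icc 1 N, dist (x (n + m)) (x (n + 1)) ^ 2 :=
        Finset.sum_nonneg fun n _ => sq_nonneg _
      positivity
    · filter_upwards [eventually_ge_atTop 1] with N hN
      have hNpos : (0:ℝ) < N := by exact_mod_cast hN
      have hb1 := hbb (N+1) (by omega)
      have h1 : (1 / (N:ℝ)) * ∑ n ∈ Finset.Icc 1 N, dist (x (n + m)) (x (n + 1)) ^ 2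
          ≤ (1 / (N:ℝ)) * ((m * b (N+1) : ℕ) : ℝ) := by
        apply mul_le_mul_of_nonneg_left (hsum N) (by positivity)
      refine h1.trans ?_
      push_cast at hb1 ⊢
      calc 1/(N:ℝ) * ((m:ℝ) * (b (N+1) : ℝ)) = (m:ℝ) * ((b (N+1) : ℝ) / N) := by ring
        _ ≤ (m:ℝ) * ((Real.sqrt (2*((N:ℝ)+1)) + 1) / N) := by gcongr
    · exact hg
  rw [hten.limsup_eq]
  exact hε
end

section
/- Every Besicovitch almost periodic sequence is a compact sequence. -/
open Filter Finset MeasureTheory Topology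
open scoped Classical

/-- The Cesàro averages of `‖x n‖` are bounded (limsup finite). -/
def CesaroBounded (x : ℕ → ℂ) : Prop :=
  ∃ C : ℝ, ∀ N : ℕ, (1 / (N : ℝ)) * ∑ n ∈ Finset.Icc 1 N, ‖x n‖ ≤ C

/-- A bounded sequence. -/
def SeqBdd (y : ℕ → ℂ) : Prop := ∃ C : ℝ, ∀ n : ℕ, ‖y n‖ ≤ C

/-- `ℓ h` is the limit of the shifted correlations of `x` against `y` along `Nq`. -/
def CorrLim (x y : ℕ → ℂ) (Nq : ℕ → ℕ) (ℓ : ℕ → ℂ) : Prop :=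
  ∀ h : ℕ, 1 ≤ h →
    Tendsto (fun q : ℕ => (1 / (Nq q : ℂ)) * ∑ n ∈ Finset.Icc 1 (Nq q),
      x (n + h) * (starRingEnd ℂ) (y n)) atTop (nhds (ℓ h))

/-- A weakly mixing sequence of complex numbers. -/
def WeaklyMixingSeq (x : ℕ → ℂ) : Prop :=
  CesaroBounded x ∧
  ∀ y : ℕ → ℂ, SeqBdd y → ∀ Nq : ℕ → ℕ, StrictMono Nq → ∀ ℓ : ℕ → ℂ,
    CorrLim x y Nq ℓ →
    Tendsto (fun H : ℕ => (1 / (H : ℝ)) * ∑ h ∈ Finset.Icc 1 H, ‖ℓ h‖) atTop (nhds 0)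

/-- A strongly mixing sequence of complex numbers. -/
def StronglyMixingSeq (x : ℕ → ℂ) : Prop :=
  CesaroBounded x ∧
  ∀ y : ℕ → ℂ, SeqBdd y → ∀ Nq : ℕ → ℕ, StrictMono Nq → ∀ ℓ : ℕ → ℂ,
    CorrLim x y Nq ℓ →
    Tendsto (fun h : ℕ => ‖ℓ h‖) atTop (nhds 0)

/-- A compact sequence of complex numbers. -/
def CompactSeq (c : ℕ → ℂ) : Prop :=
  SeqBdd c ∧
  ∀ ε : ℝ, 0 < ε → ∃ K : ℕ, 1 ≤ K ∧ ∀ m : ℕ, 1 ≤ m →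
    ∃ k : ℕ, 1 ≤ k ∧ k ≤ K ∧
      Filter.limsup (fun N : ℕ => (1 / (N : ℝ)) *
        ∑ n ∈ Finset.Icc 1 N, ‖c (n + m) - c (n + k)‖ ^ 2) atTop < ε

/-- A Besicovitch almost periodic sequence. -/
def BesicovitchAP (x : ℕ → ℂ) : Prop :=
  SeqBdd x ∧
  ∀ ε : ℝ, 0 < ε → ∃ (J : ℕ) (a lam : Fin J → ℂ),
    (∀ j, ‖lam j‖ = 1) ∧
    Filter.limsup (fun N : ℕ => (1 / (N : ℝ)) *
      ∑ n ∈ Finset.Icc 1 N, ‖x n - ∑ j, a j * lam j ^ n‖) atTop < ε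

/-!
Fix `ε` and approximate `x` in Besicovitch mean, up to `δ`, by a trigonometric polynomial
`P n = ∑ j, a j * λ j ^ n`. The vectors `(λ j ^ m)_j` lie in a compact polydisc, so those with
exponents `k ≤ K` form a finite net, and choosing `k` close to `m` makes `P (n + m)` and
`P (n + k)` uniformly close in `n`. As `|x| ≤ C`, `|x (n + m) - x (n + k)|²` is at most `2C` times
`|x (n + m) - x (n + k)|`, whose Cesàro mean is controlled by the two shifted approximation errors;
a shift by `h` at most doubles the mean over `[1, N]` once `N ≥ h`.
-/

noncomputable def cesaroMean (f : ℕ → ℝ) (N : ℕ) : ℝ := (1 / (N : ℝ)) * ∑ n ∈ Icc 1 N, f n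

section CesaroMean

variable {f g : ℕ → ℝ} {N : ℕ}

lemma cesaroMean_nonneg (hf : ∀ n, 0 ≤ f n) : 0 ≤ cesaroMean f N :=
  mul_nonneg (by positivity) (sum_nonneg fun n _ => hf n)

lemma cesaroMean_mono (h : ∀ n, f n ≤ g n) : cesaroMean f N ≤ cesaroMean g N :=
  mul_le_mul_of_nonneg_left (sum_le_sum fun n _ => h n) (by positivity)

lemma cesaroMean_add : cesaroMean (fun n => f n + g n) N = cesaroMean f N + cesaroMean g N := by
  simp only [cesaroMean, sum_add_distrib, mul_add]

lemma cesaroMean_const_mul (c : ℝ) : cesaroMean (fun n => c * f n) N = c * cesaroMean f N := by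
  simp only [cesaroMean, ← mul_sum]
  ring

lemma cesaroMean_const_le {c : ℝ} (hc : 0 ≤ c) : cesaroMean (fun _ => c) N ≤ c := by
  rcases N.eq_zero_or_pos with rfl | hN
  · simpa [cesaroMean] using hc
  · simp [cesaroMean, hN.ne']

lemma cesaroMean_le {c : ℝ} (hf : ∀ n, f n ≤ c) (hc : 0 ≤ c) : cesaroMean f N ≤ c :=
  (cesaroMean_mono hf).trans (cesaroMean_const_le hc)

lemma cesaroMean_comp_add_le (hf : ∀ n, 0 ≤ f n) {h : ℕ} (hhN : h ≤ N) :
    cesaroMean (fun n => f (n + h)) N ≤ 2 * cesaroMean f (N + h) := by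
  have hsum : ∑ n ∈ Icc 1 N, f (n + h) ≤ ∑ n ∈ Icc 1 (N + h), f n := by
    have hshift : ∑ n ∈ Icc 1 N, f (n + h) = ∑ n ∈ Icc (1 + h) (N + h), f n := by
      rw [← map_add_right_Icc, sum_map]
      rfl
    rw [hshift]
    exact sum_le_sum_of_subset_of_nonneg (Icc_subset_Icc (by omega) le_rfl) fun n _ _ => hf n
  have hweight : 1 / (N : ℝ) ≤ 2 / ((N + h : ℕ) : ℝ) := by
    rcases N.eq_zero_or_pos with rfl | hN
    · simp [show h = 0 by omega]
    · rw [div_le_div_iff₀ (by positivity) (by positivity)]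
      push_cast
      linarith [(Nat.cast_le (α := ℝ)).2 hhN]
  calc cesaroMean (fun n => f (n + h)) N
      ≤ 1 / (N : ℝ) * ∑ n ∈ Icc 1 (N + h), f n :=
        mul_le_mul_of_nonneg_left hsum (by positivity)
    _ ≤ 2 / ((N + h : ℕ) : ℝ) * ∑ n ∈ Icc 1 (N + h), f n :=
        mul_le_mul_of_nonneg_right hweight (sum_nonneg fun n _ => hf n)
    _ = 2 * cesaroMean f (N + h) := by
        rw [cesaroMean]
        ring

lemma eventually_cesaroMean_comp_add_lt (hf : ∀ n, 0 ≤ f n) {δ : ℝ}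
    (hδ : ∀ᶠ N in atTop, cesaroMean f N < δ) (h : ℕ) :
    ∀ᶠ N in atTop, cesaroMean (fun n => f (n + h)) N < 2 * δ := by
  filter_upwards [(tendsto_add_atTop_nat h).eventually hδ, eventually_ge_atTop h] with N hN hhN
  linarith [cesaroMean_comp_add_le hf hhN]

end CesaroMean

lemma norm_sub_sq_le {E : Type*} [SeminormedAddCommGroup E] {x y p q : E} {C : ℝ}
    (hx : ‖x‖ ≤ C) (hy : ‖y‖ ≤ C) :
    ‖x - y‖ ^ 2 ≤ 2 * C * (‖x - p‖ + ‖y - q‖ + ‖p - q‖) := by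
  have hbound : ‖x - y‖ ≤ 2 * C := by linarith [norm_sub_le x y]
  have htri : ‖x - y‖ ≤ ‖x - p‖ + ‖y - q‖ + ‖p - q‖ := by
    linarith [norm_sub_le_norm_sub_add_norm_sub x p y, norm_sub_le_norm_sub_add_norm_sub p q y,
      norm_sub_rev y q]
  nlinarith [norm_nonneg (x - y)]

lemma limsup_cesaroMean_sq_sub_le {x P : ℕ → ℂ} {C δ η : ℝ} {m k : ℕ}
    (hx : ∀ n, ‖x n‖ ≤ C) (hP : SeqBdd P) (hPmk : ∀ n, ‖P (n + m) - P (n + k)‖ ≤ η)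
    (hxP : limsup (cesaroMean fun n => ‖x n - P n‖) atTop < δ) :
    limsup (cesaroMean fun n => ‖x (n + m) - x (n + k)‖ ^ 2) atTop ≤ 2 * C * (4 * δ + η) := by
  obtain ⟨B, hB⟩ := hP
  have hC : 0 ≤ C := (norm_nonneg _).trans (hx 0)
  have hB0 : 0 ≤ B := (norm_nonneg _).trans (hB 0)
  have hη : 0 ≤ η := (norm_nonneg _).trans (hPmk 0)
  have herr : ∀ᶠ N in atTop, cesaroMean (fun n => ‖x n - P n‖) N < δ :=
    eventually_lt_of_limsup_lt hxP <| isBoundedUnder_of ⟨C + B, fun N =>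
      cesaroMean_le (fun n => (norm_sub_le _ _).trans (add_le_add (hx n) (hB n))) (by linarith)⟩
  have herr_nonneg : ∀ n, 0 ≤ ‖x n - P n‖ := fun n => norm_nonneg _
  refine limsup_le_of_le (isCoboundedUnder_le_of_le atTop (x := 0) fun N =>
    cesaroMean_nonneg fun n => by positivity) ?_
  filter_upwards [eventually_cesaroMean_comp_add_lt herr_nonneg herr m,
    eventually_cesaroMean_comp_add_lt herr_nonneg herr k] with N hm hk
  calc cesaroMean (fun n => ‖x (n + m) - x (n + k)‖ ^ 2) N
      ≤ cesaroMean (fun n => 2 * C *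
          (‖x (n + m) - P (n + m)‖ + ‖x (n + k) - P (n + k)‖ + η)) N :=
        cesaroMean_mono fun n => (norm_sub_sq_le (hx _) (hx _)).trans (by gcongr; exact hPmk n)
    _ = 2 * C * (cesaroMean (fun n => ‖x (n + m) - P (n + m)‖) N
          + cesaroMean (fun n => ‖x (n + k) - P (n + k)‖) N + cesaroMean (fun _ => η) N) := by
        rw [cesaroMean_const_mul, cesaroMean_add, cesaroMean_add]
    _ ≤ 2 * C * (2 * δ + 2 * δ + η) := by
        gcongr
        exact cesaroMean_const_le hη
    _ = 2 * C * (4 * δ + η) := by ring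

lemma exists_forall_exists_le_dist_lt_of_totallyBounded {α : Type*} [PseudoMetricSpace α]
    {u : ℕ → α} (hu : TotallyBounded (Set.range u)) {ε : ℝ} (hε : 0 < ε) :
    ∃ K, ∀ m, ∃ k ≤ K, dist (u m) (u k) < ε := by
  obtain ⟨t, htu, htfin, hcover⟩ := Metric.finite_approx_of_totallyBounded hu ε hε
  obtain ⟨s, -, hsfin, hscover⟩ := Set.exists_subset_image_finite_and
    (p := fun t => Set.range u ⊆ ⋃ y ∈ t, Metric.ball y ε)
    |>.1 ⟨t, by rwa [Set.image_univ], htfin, hcover⟩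
  obtain ⟨K, hK⟩ := hsfin.bddAbove
  refine ⟨K, fun m => ?_⟩
  obtain ⟨k, hks, hmk⟩ : ∃ k ∈ s, u m ∈ Metric.ball (u k) ε := by
    simpa using hscover (Set.mem_range_self m)
  exact ⟨k, hK hks, hmk⟩

section TrigPoly

variable {ι : Type*} [Fintype ι]

def trigPoly (a lam : ι → ℂ) (n : ℕ) : ℂ := ∑ i, a i * lam i ^ n

variable (a : ι → ℂ) {lam : ι → ℂ}

lemma norm_trigPoly_le (hlam : ∀ i, ‖lam i‖ = 1) (n : ℕ) : ‖trigPoly a lam n‖ ≤ ∑ i, ‖a i‖ :=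
  (norm_sum_le _ _).trans <| sum_le_sum fun i _ => by simp [hlam i]

lemma norm_trigPoly_add_sub_le (hlam : ∀ i, ‖lam i‖ = 1) (n m k : ℕ) :
    ‖trigPoly a lam (n + m) - trigPoly a lam (n + k)‖
      ≤ (∑ i, ‖a i‖) * dist (fun i => lam i ^ m) (fun i => lam i ^ k) := by
  have hdiff : trigPoly a lam (n + m) - trigPoly a lam (n + k)
      = ∑ i, a i * lam i ^ n * (lam i ^ m - lam i ^ k) := by
    simp only [trigPoly, ← sum_sub_distrib, pow_add]
    exact sum_congr rfl fun i _ => by ring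
  rw [hdiff, sum_mul]
  refine (norm_sum_le _ _).trans <| sum_le_sum fun i _ => ?_
  rw [norm_mul, norm_mul, norm_pow, hlam i, one_pow, mul_one, ← dist_eq_norm]
  exact mul_le_mul_of_nonneg_left (dist_le_pi_dist (fun i => lam i ^ m) (fun i => lam i ^ k) i) (norm_nonneg _)

lemma exists_forall_norm_trigPoly_add_sub_le (hlam : ∀ i, ‖lam i‖ = 1) {η : ℝ} (hη : 0 < η) :
    ∃ K, 1 ≤ K ∧ ∀ m, 1 ≤ m → ∃ k, 1 ≤ k ∧ k ≤ K ∧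
      ∀ n, ‖trigPoly a lam (n + m) - trigPoly a lam (n + k)‖ ≤ η := by
  set A := ∑ i, ‖a i‖
  have hA : 0 ≤ A := sum_nonneg fun i _ => norm_nonneg _
  let u : ℕ → ι → ℂ := fun m i => lam i ^ (m + 1)
  have hu : TotallyBounded (Set.range u) := by
    refine (isCompact_closedBall (0 : ι → ℂ) 1).totallyBounded.subset ?_
    rintro _ ⟨m, rfl⟩
    simp [u, pi_norm_le_iff_of_nonneg, hlam]
  obtain ⟨K, hK⟩ := exists_forall_exists_le_dist_lt_of_totallyBounded hu
    (div_pos hη (by linarith : 0 < A + 1))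
  refine ⟨K + 1, by omega, fun m hm => ?_⟩
  obtain ⟨m, rfl⟩ : ∃ m', m = m' + 1 := ⟨m - 1, by omega⟩
  obtain ⟨k, hkK, hmk⟩ := hK m
  refine ⟨k + 1, by omega, by omega, fun n => ?_⟩
  calc ‖trigPoly a lam (n + (m + 1)) - trigPoly a lam (n + (k + 1))‖
      ≤ A * dist (u m) (u k) := norm_trigPoly_add_sub_le a hlam n _ _
    _ ≤ (A + 1) * (η / (A + 1)) := by gcongr; linarith
    _ = η := by field_simp

end TrigPoly

theorem stmt4 (x : ℕ → ℂ) (hx : BesicovitchAP x) : CompactSeq x := by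
  obtain ⟨⟨C, hC⟩, happrox⟩ := hx
  refine ⟨⟨C, hC⟩, fun ε hε => ?_⟩
  have hC0 : 0 ≤ C := (norm_nonneg _).trans (hC 0)
  set δ := ε / (10 * C + 1) with hδ
  have hδ0 : 0 < δ := by positivity
  obtain ⟨J, a, lam, hlam, hxP⟩ := happrox δ hδ0
  obtain ⟨K, hK1, hK⟩ := exists_forall_norm_trigPoly_add_sub_le a hlam hδ0
  refine ⟨K, hK1, fun m hm => ?_⟩
  obtain ⟨k, hk1, hkK, hmk⟩ := hK m hm
  refine ⟨k, hk1, hkK, ?_⟩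
  calc _ ≤ 2 * C * (4 * δ + δ) :=
        limsup_cesaroMean_sq_sub_le hC ⟨_, norm_trigPoly_le a hlam⟩ hmk hxP
    _ = 10 * C * ε / (10 * C + 1) := by rw [hδ]; ring
    _ < ε := by rw [div_lt_iff₀ (by positivity)]; linarith
end

section
/- Let ([0,1], B, μ, T) be a measure-preserving system. Suppose that for every f ∈ L^∞ with ∫ f dμ = 0 there is a full-measure set A_f such that for every x ∈ A_f the sequence (f(Tⁿx)) is a strongly mixing sequence. Then T is strongly mixing: for all measurable A, B, lim_{h→∞} μ(T⁻ʰA ∩ B) = μ(A)μ(B). -/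
open Filter Finset MeasureTheory Topology
open scoped Classical

/-!
Fix `f = 1_A - μ(A)` and `g = 1_B`, so that `μ(T⁻ʰA ∩ B) - μ(A)μ(B) = ∫ f ∘ Tʰ · conj g`.
By von Neumann's mean ergodic theorem, for each `h` the Birkhoff averages of
`F_h = (f ∘ Tʰ · conj g) ∘ T` converge in `L²` to some `P_h` with `∫ P_h = ∫ f ∘ Tʰ · conj g`;
a single fast subsequence `N_q` makes them converge a.e., simultaneously for all `h`.
At such a point `x` the value `P_h(x)` is exactly the correlation limit `ℓ(h)` of the
sequences `f(Tⁿx)` and `g(Tⁿx)` along `N_q`, so strong mixing of `f(Tⁿx)` gives `P_h(x) → 0`,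
and dominated convergence gives `∫ P_h → 0`.
-/

open scoped ENNReal

section
variable {X E : Type*} [NormedAddCommGroup E]

theorem birkhoffSum_comp_eq_sum_Icc {M : Type*} [AddCommMonoid M] (T : X → X) (ψ : X → M)
    (N : ℕ) (x : X) : birkhoffSum T (ψ ∘ T) N x = ∑ n ∈ Icc 1 N, ψ (T^[n] x) := by
  induction N with
  | zero => simp
  | succ N ih =>
    rw [birkhoffSum_succ, ih, Finset.sum_Icc_succ_top (by omega), Function.comp_apply,
      ← Function.iterate_succ_apply' T N x]

theorem norm_birkhoffAverage_le [NormedSpace ℝ E] {T : X → X} {φ : X → E} {M : ℝ}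
    (hM : ∀ x, ‖φ x‖ ≤ M) (N : ℕ) (x : X) : ‖birkhoffAverage ℝ T φ N x‖ ≤ M := by
  have hM0 : 0 ≤ M := (norm_nonneg _).trans (hM x)
  rcases Nat.eq_zero_or_pos N with rfl | hN
  · simpa using hM0
  calc ‖birkhoffAverage ℝ T φ N x‖ = (N : ℝ)⁻¹ * ‖birkhoffSum T φ N x‖ := by
        rw [birkhoffAverage, norm_smul, norm_inv, Real.norm_natCast]
    _ ≤ (N : ℝ)⁻¹ * (N * M) := by
        gcongr
        simpa [birkhoffSum] using norm_sum_le_of_le (range N) fun k _ => hM (T^[k] x)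
    _ = M := by field_simp

end

section
variable {X E : Type*} [MeasurableSpace X] {μ : Measure X} [NormedAddCommGroup E]

theorem MeasureTheory.MeasurePreserving.integral_comp_of_aestronglyMeasurable [NormedSpace ℝ E]
    {Y : Type*} [MeasurableSpace Y] {ν : Measure Y} {T : X → Y} (hT : MeasurePreserving T μ ν)
    {φ : Y → E} (hφ : AEStronglyMeasurable φ ν) : ∫ x, φ (T x) ∂μ = ∫ y, φ y ∂ν := by
  rw [← integral_map hT.measurable.aemeasurable (by rwa [hT.map_eq]), hT.map_eq]

theorem integral_birkhoffAverage [NormedSpace ℝ E] {T : X → X} (hT : MeasurePreserving T μ μ)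
    {φ : X → E} (hφ : Integrable φ μ) {N : ℕ} (hN : N ≠ 0) :
    ∫ x, birkhoffAverage ℝ T φ N x ∂μ = ∫ x, φ x ∂μ := by
  have hcomp : ∀ k, ∫ x, φ (T^[k] x) ∂μ = ∫ x, φ x ∂μ := fun k =>
    (hT.iterate k).integral_comp_of_aestronglyMeasurable hφ.aestronglyMeasurable
  simp only [birkhoffAverage, birkhoffSum]
  rw [integral_smul, integral_finsetSum (f := fun k x => φ (T^[k] x)) (range N) fun k _ =>
    ((hT.iterate k).integrable_comp_of_integrable hφ : Integrable (fun x => φ (T^[k] x)) μ)]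
  rw [Finset.sum_congr rfl fun k _ => hcomp k, Finset.sum_const, card_range,
    ← Nat.cast_smul_eq_nsmul ℝ, inv_smul_smul₀ (Nat.cast_ne_zero.mpr hN)]

theorem integral_eq_of_ae_tendsto_birkhoffAverage [NormedSpace ℝ E] [IsFiniteMeasure μ]
    {T : X → X} (hT : MeasurePreserving T μ μ) {φ : X → E} (hφ : AEStronglyMeasurable φ μ)
    {M : ℝ} (hM : ∀ x, ‖φ x‖ ≤ M) {Nq : ℕ → ℕ} (hNq : Tendsto Nq atTop atTop) {P : X → E}
    (hP : ∀ᵐ x ∂μ, Tendsto (fun q => birkhoffAverage ℝ T φ (Nq q) x) atTop (𝓝 (P x))) :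
    ∫ x, P x ∂μ = ∫ x, φ x ∂μ := by
  have hφint : Integrable φ μ := .of_bound hφ M (ae_of_all _ hM)
  have hmeas : ∀ N, AEStronglyMeasurable (birkhoffAverage ℝ T φ N) μ := fun N =>
    .const_smul (Finset.aestronglyMeasurable_fun_sum _ fun k _ =>
      hφ.comp_measurePreserving (hT.iterate k)) _
  have hlim := tendsto_integral_of_dominated_convergence (fun _ => M) (fun q => hmeas (Nq q))
    (integrable_const M) (fun q => ae_of_all _ (norm_birkhoffAverage_le hM (Nq q))) hP
  refine tendsto_nhds_unique hlim (tendsto_const_nhds.congr' ?_)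
  filter_upwards [hNq.eventually_ne_atTop 0] with q hq
  exact (integral_birkhoffAverage hT hφint hq).symm

theorem ae_tendsto_zero_of_tsum_eLpNorm_one_ne_top {u : ℕ → X → E}
    (hu : ∀ q, AEStronglyMeasurable (u q) μ) (hsum : ∑' q, eLpNorm (u q) 1 μ ≠ ∞) :
    ∀ᵐ x ∂μ, Tendsto (fun q => u q x) atTop (𝓝 0) := by
  have hmeas : ∀ q, AEMeasurable (fun x => ‖u q x‖ₑ) μ := fun q => (hu q).enorm
  have hfinite : ∀ᵐ x ∂μ, ∑' q, ‖u q x‖ₑ < ∞ := by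
    refine ae_lt_top' (AEMeasurable.tsum hmeas) ?_
    simpa only [lintegral_tsum hmeas, eLpNorm_one_eq_lintegral_enorm] using hsum
  filter_upwards [hfinite] with x hx
  exact tendsto_zero_iff_enorm_tendsto_zero.mpr (ENNReal.tendsto_atTop_zero_of_tsum_ne_top hx.ne)

theorem MeasureTheory.Lp.exists_strictMono_ae_tendsto [IsProbabilityMeasure μ] {p : ℝ≥0∞}
    [Fact (1 ≤ p)] {u : ℕ → ℕ → Lp E p μ} {v : ℕ → Lp E p μ}
    (huv : ∀ h, Tendsto (u h) atTop (𝓝 (v h))) :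
    ∃ Nq : ℕ → ℕ, StrictMono Nq ∧
      ∀ᵐ x ∂μ, ∀ h, Tendsto (fun q => u h (Nq q) x) atTop (𝓝 (v h x)) := by
  -- With `Nq q` putting the first `q + 1` sequences `2⁻¹ ^ q`-close to their limits,
  -- every tail `q ↦ u h (Nq q) - v h` has summable `L¹` norms.
  have hfast : ∀ q, ∀ᶠ N in atTop, ∀ h ∈ Set.Iic q, edist (u h N) (v h) ≤ 2⁻¹ ^ q := fun q =>
    (Set.finite_Iic q).eventually_all.mpr fun h _ =>
      (huv h).eventually (Metric.closedEBall_mem_nhds _ (ENNReal.pow_pos (by simp) q))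
  obtain ⟨Nq, hmono, hNq⟩ := extraction_forall_of_eventually hfast
  refine ⟨Nq, hmono, ae_all_iff.mpr fun h => ?_⟩
  have hsum : ∑' q, eLpNorm (⇑(u h (Nq (q + h))) - ⇑(v h)) 1 μ ≠ ∞ := by
    have hgeom : ∑' q : ℕ, (2⁻¹ : ℝ≥0∞) ^ q ≠ ∞ := by
      simpa only [ENNReal.tsum_geometric, ENNReal.one_sub_inv_two, inv_inv]
        using ENNReal.ofNat_ne_top
    refine ne_top_of_le_ne_top hgeom (ENNReal.tsum_le_tsum fun q => ?_)
    calc eLpNorm (⇑(u h (Nq (q + h))) - ⇑(v h)) 1 μ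
        ≤ eLpNorm (⇑(u h (Nq (q + h))) - ⇑(v h)) p μ :=
          eLpNorm_le_eLpNorm_of_exponent_le Fact.out
            ((Lp.aestronglyMeasurable _).sub (Lp.aestronglyMeasurable _))
      _ = edist (u h (Nq (q + h))) (v h) := (Lp.edist_def _ _).symm
      _ ≤ 2⁻¹ ^ (q + h) := hNq (q + h) h (by simp)
      _ ≤ 2⁻¹ ^ q := pow_le_pow_of_le_one (by simp) (by simp) (by omega)
  have hlim := ae_tendsto_zero_of_tsum_eLpNorm_one_ne_top
    (fun q => (Lp.aestronglyMeasurable _).sub (Lp.aestronglyMeasurable _)) hsum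
  filter_upwards [hlim] with x hx
  rw [← tendsto_add_atTop_iff_nat h]
  simpa using hx.add_const (v h x)

theorem MeasureTheory.Lp.coeFn_birkhoffSum_compMeasurePreserving {p : ℝ≥0∞} {T : X → X}
    (hT : MeasurePreserving T μ μ) (v : Lp E p μ) (N : ℕ) :
    ⇑(birkhoffSum (Lp.compMeasurePreserving T hT) id N v) =ᵐ[μ] birkhoffSum T v N := by
  induction N with
  | zero => simpa using Lp.coeFn_zero E p μ
  | succ N ih =>
    have hiter : ⇑((Lp.compMeasurePreserving T hT)^[N] v) =ᵐ[μ] v ∘ T^[N] := by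
      rw [Lp.compMeasurePreserving_iterate]
      exact Lp.coeFn_compMeasurePreserving v (hT.iterate N)
    filter_upwards [Lp.coeFn_add (birkhoffSum (Lp.compMeasurePreserving T hT) id N v)
      ((Lp.compMeasurePreserving T hT)^[N] v), ih, hiter] with x hadd hsum hit
    rw [birkhoffSum_succ, birkhoffSum_succ, id, hadd, Pi.add_apply, hsum, hit, Function.comp_apply]

theorem MeasureTheory.Lp.coeFn_birkhoffAverage_compMeasurePreserving {𝕜 : Type*} [NormedField 𝕜]
    [NormedSpace 𝕜 E] {p : ℝ≥0∞} {T : X → X}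
    (hT : MeasurePreserving T μ μ) (v : Lp E p μ) (N : ℕ) :
    ⇑(birkhoffAverage 𝕜 (Lp.compMeasurePreserving T hT) id N v) =ᵐ[μ] birkhoffAverage 𝕜 T v N := by
  filter_upwards [Lp.coeFn_smul (N : 𝕜)⁻¹ (birkhoffSum (Lp.compMeasurePreserving T hT) id N v),
    Lp.coeFn_birkhoffSum_compMeasurePreserving hT v N] with x hsmul hsum
  simp [birkhoffAverage, hsmul, hsum]

theorem exists_strictMono_ae_tendsto_birkhoffAverage [IsProbabilityMeasure μ]
    [InnerProductSpace ℝ E] [CompleteSpace E] {T : X → X} (hT : MeasurePreserving T μ μ)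
    {φ : ℕ → X → E} (hφ : ∀ h, MemLp (φ h) 2 μ) :
    ∃ Nq : ℕ → ℕ, StrictMono Nq ∧ ∃ P : ℕ → Lp E 2 μ,
      ∀ᵐ x ∂μ, ∀ h, Tendsto (fun q => birkhoffAverage ℝ T (φ h) (Nq q) x) atTop (𝓝 (P h x)) := by
  set U := (Lp.compMeasurePreservingₗᵢ ℝ T hT (E := E) (p := 2)).toContinuousLinearMap
  have hmean : ∀ h, ∃ v : Lp E 2 μ, Tendsto (fun N =>
      (birkhoffAverage ℝ U id N ((hφ h).toLp (φ h)) : Lp E 2 μ)) atTop (𝓝 v) :=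
    fun h => ⟨_, U.tendsto_birkhoffAverage_orthogonalProjection
      (LinearIsometry.norm_toContinuousLinearMap_le _) ((hφ h).toLp (φ h))⟩
  choose v hv using hmean
  obtain ⟨Nq, hmono, hae⟩ := Lp.exists_strictMono_ae_tendsto hv
  refine ⟨Nq, hmono, v, ?_⟩
  have hcoe : ∀ᵐ x ∂μ, ∀ h N, ((birkhoffAverage ℝ U id N ((hφ h).toLp (φ h)) : Lp E 2 μ) : X → E) x
      = birkhoffAverage ℝ T (φ h) N x := by
    refine ae_all_iff.mpr fun h => ae_all_iff.mpr fun N => ?_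
    exact (Lp.coeFn_birkhoffAverage_compMeasurePreserving hT _ N).trans
      (hT.quasiMeasurePreserving.birkhoffAverage_ae_eq_of_ae_eq ℝ (MemLp.coeFn_toLp _) N)
  filter_upwards [hae, hcoe] with x hx hxc h
  simpa only [hxc] using hx h

end

section
variable {X : Type*} [MeasurableSpace X] {μ : Measure X}

theorem tendsto_integral_mul_conj_of_ae_stronglyMixingSeq [IsProbabilityMeasure μ] {T : X → X}
    (hT : MeasurePreserving T μ μ) {f g : X → ℂ} (hf : Measurable f) (hg : Measurable g)
    {Cf Cg : ℝ} (hfC : ∀ z, ‖f z‖ ≤ Cf) (hgC : ∀ z, ‖g z‖ ≤ Cg)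
    (hmix : ∀ᵐ x ∂μ, StronglyMixingSeq (fun n => f (T^[n] x))) :
    Tendsto (fun h => ∫ z, f (T^[h] z) * starRingEnd ℂ (g z) ∂μ) atTop (𝓝 0) := by
  set F : ℕ → X → ℂ := fun h z => f (T^[h] z) * starRingEnd ℂ (g z)
  have hFmeas : ∀ h, Measurable (F h) := fun h =>
    (hf.comp (hT.measurable.iterate h)).mul (Complex.continuous_conj.measurable.comp hg)
  have hFC : ∀ h z, ‖F h z‖ ≤ Cf * Cg := fun h z => by
    simpa only [F, norm_mul, Complex.norm_conj] using
      mul_le_mul (hfC _) (hgC z) (norm_nonneg _) ((norm_nonneg _).trans (hfC z))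
  obtain ⟨Nq, hNq, P, hP⟩ := exists_strictMono_ae_tendsto_birkhoffAverage hT
    (φ := fun h => F h ∘ T) fun h =>
      .of_bound ((hFmeas h).comp hT.measurable).aestronglyMeasurable _ (ae_of_all _ (hFC h <| T ·))
  have hPint : ∀ h, ∫ x, P h x ∂μ = ∫ z, F h z ∂μ := fun h =>
    (integral_eq_of_ae_tendsto_birkhoffAverage hT
      ((hFmeas h).comp hT.measurable).aestronglyMeasurable (hFC h <| T ·) hNq.tendsto_atTop
      (hP.mono fun x hx => hx h)).trans
    (hT.integral_comp_of_aestronglyMeasurable (hFmeas h).aestronglyMeasurable)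
  have hPC : ∀ᵐ x ∂μ, ∀ h, ‖P h x‖ ≤ Cf * Cg := by
    filter_upwards [hP] with x hx h
    exact le_of_tendsto (hx h).norm
      (.of_forall fun q => norm_birkhoffAverage_le (hFC h <| T ·) _ x)
  -- The `q`-th correlation average of the orbit of `x` is `birkhoffAverage ℝ T (F h ∘ T) (Nq q) x`.
  have hPzero : ∀ᵐ x ∂μ, Tendsto (fun h => P h x) atTop (𝓝 0) := by
    filter_upwards [hmix, hP] with x hmx hx
    refine tendsto_zero_iff_norm_tendsto_zero.mpr
      (hmx.2 (fun n => g (T^[n] x)) ⟨Cg, fun n => hgC _⟩ Nq hNq (fun h => P h x) fun h _ => ?_)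
    refine (hx h).congr fun q => ?_
    rw [birkhoffAverage, birkhoffSum_comp_eq_sum_Icc, Complex.real_smul, one_div]
    push_cast
    refine congrArg _ (Finset.sum_congr rfl fun n _ => ?_)
    simp only [F, ← Function.iterate_add_apply, add_comm h n]
  have hlim := tendsto_integral_of_dominated_convergence (fun _ => Cf * Cg)
    (fun h => Lp.aestronglyMeasurable (P h))
    (integrable_const _) (fun h => hPC.mono fun x hx => hx h) hPzero
  simpa only [hPint, integral_zero] using hlim

theorem integral_indicator_comp_sub_mul_conj_indicator [IsFiniteMeasure μ] {S : X → X}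
    (hS : Measurable S) {A B : Set X} (hA : MeasurableSet A) (hB : MeasurableSet B) :
    ∫ z, (A.indicator (fun _ => 1) (S z) - (μ.real A : ℂ)) *
        starRingEnd ℂ (B.indicator (fun _ => 1) z) ∂μ
      = ((μ.real (S ⁻¹' A ∩ B) - μ.real A * μ.real B : ℝ) : ℂ) := by
  have hpointwise : ∀ z, (A.indicator (fun _ => 1) (S z) - (μ.real A : ℂ)) *
        starRingEnd ℂ (B.indicator (fun _ => 1) z)
      = (S ⁻¹' A ∩ B).indicator (fun _ => 1) z - (μ.real A : ℂ) * B.indicator (fun _ => 1) z := by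
    intro z
    by_cases hzA : S z ∈ A <;> by_cases hzB : z ∈ B <;> simp [hzA, hzB]
  have hSAB : MeasurableSet (S ⁻¹' A ∩ B) := (hS hA).inter hB
  rw [integral_congr_ae (ae_of_all _ hpointwise), integral_sub, integral_const_mul,
    integral_indicator_const _ hSAB, integral_indicator_const _ hB]
  · simp only [Complex.real_smul, mul_one]
    push_cast
    ring
  · exact (integrable_const _).indicator hSAB
  · exact ((integrable_const _).indicator hB).const_mul _

end

theorem stmt11 (μ : MeasureTheory.Measure (Set.Icc (0 : ℝ) 1))
    [MeasureTheory.IsProbabilityMeasure μ]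
    (T : Set.Icc (0 : ℝ) 1 → Set.Icc (0 : ℝ) 1)
    (hT : MeasureTheory.MeasurePreserving T μ μ)
    (H : ∀ f : Set.Icc (0 : ℝ) 1 → ℂ, Measurable f → (∃ C : ℝ, ∀ z, ‖f z‖ ≤ C) →
      (∫ z, f z ∂μ) = 0 →
      ∃ A : Set (Set.Icc (0 : ℝ) 1), μ Aᶜ = 0 ∧
        ∀ x ∈ A, StronglyMixingSeq (fun n : ℕ => f (T^[n] x))) :
    ∀ A B : Set (Set.Icc (0 : ℝ) 1), MeasurableSet A → MeasurableSet B →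
      Tendsto (fun h : ℕ => (μ (T^[h] ⁻¹' A ∩ B)).toReal) atTop
        (nhds ((μ A).toReal * (μ B).toReal)) := by
  intro A B hA hB
  have hind : ∀ (s : Set (Set.Icc (0 : ℝ) 1)) z, ‖s.indicator (fun _ => (1 : ℂ)) z‖ ≤ 1 :=
    fun s z => (norm_indicator_le_norm_self _ z).trans (by simp)
  set f : Set.Icc (0 : ℝ) 1 → ℂ := fun z => A.indicator (fun _ => 1) z - (μ.real A : ℂ)
  have hf : Measurable f := (measurable_const.indicator hA).sub measurable_const
  have hfC : ∀ z, ‖f z‖ ≤ 2 := fun z => (norm_sub_le _ _).trans <| by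
    have : ‖(μ.real A : ℂ)‖ ≤ 1 := by
      rw [Complex.norm_real, Real.norm_of_nonneg measureReal_nonneg]
      exact measureReal_le_one
    linarith [hind A z]
  have hf0 : ∫ z, f z ∂μ = 0 := by
    rw [integral_sub ((integrable_const (1 : ℂ)).indicator hA) (integrable_const _),
      integral_indicator_const _ hA]
    simp
  obtain ⟨S, hS, hmix⟩ := H f hf ⟨2, hfC⟩ hf0
  have hcorr := tendsto_integral_mul_conj_of_ae_stronglyMixingSeq hT hf
    (measurable_const.indicator hB) hfC (hind B) (mem_of_superset (mem_ae_iff.mpr hS) hmix)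
  simp only [f, integral_indicator_comp_sub_mul_conj_indicator (hT.measurable.iterate _) hA hB,
    ← Complex.ofReal_zero, tendsto_ofReal_iff, tendsto_sub_nhds_zero_iff] at hcorr
  exact hcorr
end
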